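/- For every x₁ ∈ [0,1], the function h ↦ G₃(x₁,h) has a unique minimizer over [0,1], equal to (1 − x₁)/2 if 0 ≤ x₁ < 1/3, equal to x₁ if 1/3 ≤ x₁ < 2/3, and equal to 1 − x₁/2 if 2/3 ≤ x₁ ≤ 1. -/
import Mathlib


/-- Expected final rank in Robbins' problem with 3 observations, first observation `x₁`,
second accepted iff `≤ h`, third always accepted. -/
noncomputable def G₃ (x₁ h : ℝ) : ℝ :=
  3/2 + h^2 - h + (1 - x₁) * (1 - h) + max (h - x₁) 0

lemma key (x h : ℝ) (hx0 : 0 ≤ x) (hx1 : x ≤ 1) :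
    G₃ x (if x < 1/3 then (1 - x)/2 else if x < 2/3 then x else 1 - x/2) + 
    (h - (if x < 1/3 then (1 - x)/2 else if x < 2/3 then x else 1 - x/2))^2 ≤ G₃ x h := by
  unfold G₃
  rcases le_total (h - x) 0 with hm | hm <;>
    [rw [max_eq_right hm]; rw [max_eq_left hm]] <;>
  split_ifs with h1 h2 h2 <;>
  · first
    | (rw [max_eq_left (by linarith)]; nlinarith [sq_nonneg (h - x)])
    | (rw [max_eq_right (by linarith)]; nlinarith [sq_nonneg (h - x)])

theorem robbins_n3_optimal_threshold :
    ∀ x₁ ∈ Set.Icc (0:ℝ) 1, ∀ h₀ : ℝ,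
      (h₀ ∈ Set.Icc (0:ℝ) 1 ∧ ∀ h ∈ Set.Icc (0:ℝ) 1, G₃ x₁ h₀ ≤ G₃ x₁ h) ↔
      h₀ = (if x₁ < 1/3 then (1 - x₁)/2 else if x₁ < 2/3 then x₁ else 1 - x₁/2) := by
  rintro x ⟨hx0, hx1⟩ h₀
  set m := (if x < 1/3 then (1 - x)/2 else if x < 2/3 then x else 1 - x/2) with hm
  have hmem : m ∈ Set.Icc (0:ℝ) 1 := by
    rw [hm]; split_ifs <;> constructor <;> linarith
  constructor
  · rintro ⟨hh₀, hmin⟩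
    have h1 := hmin m hmem
    have h2 := key x h₀ hx0 hx1
    rw [← hm] at h2
    have : (h₀ - m)^2 ≤ 0 := by linarith
    have : h₀ - m = 0 := by nlinarith [sq_nonneg (h₀ - m)]
    linarith
  · rintro rfl
    refine ⟨hmem, fun h _ => ?_⟩
    have := key x h hx0 hx1
    rw [← hm] at this
    nlinarith [sq_nonneg (h - m)]
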